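/- arXiv:2408.14336 — 3 statements merged into one kernel-verified Lean document; each statement's English description precedes it below -/
import Mathlib

section
/- Invariance of the History-MDP transition function: for a group-invariant POMDP, for every g ∈ G, every pair of histories h, h' ∈ H, and every a ∈ A, one has T̄(g•h, g•a, g•h') = T̄(h, a, h'). -/
open scoped NNReal

/-- A group-invariant POMDP over finite types of states `S`, actions `A`,
and observations `Ω`, with a group `G` acting on each. -/
structure GIPOMDP (G S A Ω : Type) [Group G] [MulAction G S] [MulAction G A] [MulAction G Ω]
    [Fintype S] [Fintype A] [Fintype Ω] where
  b0 : S → ℝ≥0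
  T : S → A → S → ℝ≥0
  R : S → A → ℝ
  O0 : S → Ω → ℝ≥0
  O : A → S → Ω → ℝ≥0
  b0_sum : ∑ s, b0 s = 1
  b0_inv : ∀ (g : G) (s : S), b0 (g • s) = b0 s
  T_sum : ∀ (s : S) (a : A), ∑ s', T s a s' = 1
  T_inv : ∀ (g : G) (s : S) (a : A) (s' : S), T (g • s) (g • a) (g • s') = T s a s'
  R_inv : ∀ (g : G) (s : S) (a : A), R (g • s) (g • a) = R s a
  O0_sum : ∀ s : S, ∑ o, O0 s o = 1
  O0_inv : ∀ (g : G) (s : S) (o : Ω), O0 (g • s) (g • o) = O0 s o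
  O_sum : ∀ (a : A) (s' : S), ∑ o, O a s' o = 1
  O_inv : ∀ (g : G) (a : A) (s' : S) (o : Ω), O (g • a) (g • s') (g • o) = O a s' o

/-- A history: an initial observation followed by a list of action–observation pairs. -/
abbrev Hist (A Ω : Type) : Type := Ω × List (A × Ω)

variable {G S A Ω : Type} [Group G] [MulAction G S] [MulAction G A] [MulAction G Ω]
  [Fintype S] [Fintype A] [Fintype Ω]

/-- Componentwise group action on histories. -/
def histAct (g : G) (h : Hist A Ω) : Hist A Ω :=
  (g • h.1, h.2.map fun p => (g • p.1, g • p.2))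

/-- Appending an action–observation pair to a history: `h·(a,o)`. -/
def snocH (h : Hist A Ω) (a : A) (o : Ω) : Hist A Ω :=
  (h.1, h.2 ++ [(a, o)])

/-- Unnormalized filter weight, by recursion on the reversed action–observation list. -/
noncomputable def wRev (P : GIPOMDP G S A Ω) (o0 : Ω) : List (A × Ω) → S → ℝ≥0
  | [] => fun s => P.b0 s * P.O0 s o0
  | (a, o) :: rest => fun s' => (∑ s, wRev P o0 rest s * P.T s a s') * P.O a s' o

/-- Unnormalized filter weight `w_h(s)`: `w_{(o0,[])}(s) = b0(s)·O0(s,o0)` and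
`w_{h·(a,o)}(s') = (Σ_s w_h(s)·T(s,a,s'))·O(a,s',o)`. -/
noncomputable def w (P : GIPOMDP G S A Ω) (h : Hist A Ω) (s : S) : ℝ≥0 :=
  wRev P h.1 h.2.reverse s

/-- Belief `Pr(s|h)`, with the convention that it is `0` when the weights sum to `0`. -/
noncomputable def belief (P : GIPOMDP G S A Ω) (h : Hist A Ω) (s : S) : ℝ≥0 :=
  if 0 < ∑ s', w P h s' then w P h s / ∑ s', w P h s' else 0

/-- Conditional observation probability `Pr(o|h,a) = Σ_s Pr(s|h)·Σ_{s'} T(s,a,s')·O(a,s',o)`. -/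
noncomputable def probObs (P : GIPOMDP G S A Ω) (h : Hist A Ω) (a : A) (o : Ω) : ℝ≥0 :=
  ∑ s, belief P h s * ∑ s', P.T s a s' * P.O a s' o

open Classical in
/-- History-MDP transition function: `T̄(h,a,h') = Pr(o|h,a)` if `h' = h·(a,o)` for some `o`,
and `0` otherwise. -/
noncomputable def Tbar (P : GIPOMDP G S A Ω) (h : Hist A Ω) (a : A) (h' : Hist A Ω) : ℝ≥0 :=
  ∑ o, if h' = snocH h a o then probObs P h a o else 0

/-- History-MDP reward function `R̄(h,a) = Σ_s Pr(s|h)·R(s,a)`. -/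
noncomputable def Rbar (P : GIPOMDP G S A Ω) (h : Hist A Ω) (a : A) : ℝ :=
  ∑ s, (belief P h s : ℝ) * P.R s a

/-- Bellman optimality operator of the History-MDP:
`(BQ)(h,a) = R̄(h,a) + γ·Σ_o Pr(o|h,a)·max_{a'} Q(h·(a,o), a')`. -/
noncomputable def bellman [Nonempty A] (P : GIPOMDP G S A Ω) (γ : ℝ)
    (Q : Hist A Ω × A → ℝ) : Hist A Ω × A → ℝ :=
  fun x => Rbar P x.1 x.2 + γ * ∑ o, (probObs P x.1 x.2 o : ℝ) *
    Finset.univ.sup' Finset.univ_nonempty (fun a' => Q (snocH x.1 x.2 o, a'))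

lemma wRev_inv (P : GIPOMDP G S A Ω) (g : G) (o0 : Ω) (l : List (A × Ω)) (s : S) :
    wRev P (g • o0) (l.map fun p => (g • p.1, g • p.2)) (g • s) = wRev P o0 l s := by
  induction l generalizing s with
  | nil => simp [wRev, P.b0_inv, P.O0_inv]
  | cons p rest ih =>
    obtain ⟨a, o⟩ := p
    simp only [List.map_cons, wRev, P.O_inv]
    congr 1
    rw [← Equiv.sum_comp (MulAction.toPerm g : Equiv.Perm S)
      (fun t => wRev P (g • o0) (rest.map fun p => (g • p.1, g • p.2)) t * P.T t (g • a) (g • s))]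
    exact Finset.sum_congr rfl fun t _ => by simp [ih, P.T_inv]

lemma w_inv (P : GIPOMDP G S A Ω) (g : G) (h : Hist A Ω) (s : S) :
    w P (histAct g h) (g • s) = w P h s := by
  simpa [w, histAct, List.map_reverse] using wRev_inv P g h.1 h.2.reverse s

lemma belief_inv (P : GIPOMDP G S A Ω) (g : G) (h : Hist A Ω) (s : S) :
    belief P (histAct g h) (g • s) = belief P h s := by
  have hsum : ∑ s', w P (histAct g h) s' = ∑ s', w P h s' := by
    rw [← Equiv.sum_comp (MulAction.toPerm g : Equiv.Perm S) (fun t => w P (histAct g h) t)]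
    · exact Finset.sum_congr rfl fun t _ => by simp [MulAction.toPerm, w_inv]
  rw [belief, belief, hsum, w_inv]

lemma probObs_inv (P : GIPOMDP G S A Ω) (g : G) (h : Hist A Ω) (a : A) (o : Ω) :
    probObs P (histAct g h) (g • a) (g • o) = probObs P h a o := by
  rw [probObs, probObs,
    ← Equiv.sum_comp (MulAction.toPerm g : Equiv.Perm S)
      (fun t => belief P (histAct g h) t * ∑ s', P.T t (g • a) s' * P.O (g • a) s' (g • o))]
  refine Finset.sum_congr rfl fun t _ => ?_
  simp only [MulAction.toPerm_apply, belief_inv]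
  congr 1
  rw [← Equiv.sum_comp (MulAction.toPerm g : Equiv.Perm S)
      (fun s' => P.T (g • t) (g • a) s' * P.O (g • a) s' (g • o))]
  exact Finset.sum_congr rfl fun s' _ => by simp [P.T_inv, P.O_inv]

/-- Invariance of the History-MDP transition function:
T̄(g•h, g•a, g•h') = T̄(h, a, h'). -/
theorem Tbar_invariant {G S A Ω : Type} [Group G] [MulAction G S] [MulAction G A] [MulAction G Ω]
    [Fintype S] [Fintype A] [Fintype Ω] [Nonempty S] [Nonempty A] [Nonempty Ω]
    (P : GIPOMDP G S A Ω)
    (g : G) (h h' : Hist A Ω) (a : A) :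
    Tbar P (histAct g h) (g • a) (histAct g h') = Tbar P h a h' := by
  classical
  rw [Tbar, Tbar,
    ← Equiv.sum_comp (MulAction.toPerm g : Equiv.Perm Ω)
      (fun o => if histAct g h' = snocH (histAct g h) (g • a) o then
        probObs P (histAct g h) (g • a) o else 0)]
  refine Finset.sum_congr rfl fun o _ => ?_
  simp only [MulAction.toPerm_apply, probObs_inv]
  congr 1
  have hinj : Function.Injective (histAct g (A := A) (Ω := Ω)) := by
    intro x y hxy
    have := congrArg (histAct g⁻¹) hxy
    simp only [histAct, List.map_map] at this
    simpa [Function.comp_def, inv_smul_smul, Prod.ext_iff] using this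
  have : histAct g (snocH h a o) = snocH (histAct g h) (g • a) (g • o) := by
    simp [histAct, snocH]
  rw [← this]
  exact propext ⟨fun e => hinj e, fun e => congrArg _ e⟩
end

section
/- Invariance of the value-iteration iterates for a group-invariant POMDP: define Q_0 := 0 and Q_{n+1} := B Q_n for n ∈ ℕ. Then for every n ∈ ℕ, g ∈ G, h ∈ H, and a ∈ A, one has Q_n(g•h, g•a) = Q_n(h, a). -/
open scoped NNReal

variable {G S A Ω : Type} [Group G] [MulAction G S] [MulAction G A] [MulAction G Ω]
  [Fintype S] [Fintype A] [Fintype Ω]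

/-- Value-iteration iterates: `Q_0 = 0` and `Q_{n+1} = B Q_n`. -/
noncomputable def qIter [Nonempty A] (P : GIPOMDP G S A Ω) (γ : ℝ) :
    ℕ → (Hist A Ω × A → ℝ)
  | 0 => 0
  | n + 1 => bellman P γ (qIter P γ n)

/-!
Every ingredient of the Bellman operator is equivariant: the filter weights, and hence the
beliefs, satisfy `w_{g•h}(g•s) = w_h(s)` by induction on the history, since the kernels are
invariant and a sum over `S` (or `Ω`, or a maximum over `A`) may be reindexed by the bijection
`g • ·`. So `B` maps invariant functions to invariant functions, and induction on `n` concludes.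
-/

open Finset

lemma Finset.sup'_univ_comp_equiv {ι α : Type*} [Fintype ι] [Nonempty ι] [SemilatticeSup α]
    (e : ι ≃ ι) (f : ι → α) :
    univ.sup' univ_nonempty (f ∘ e) = univ.sup' univ_nonempty f :=
  (sup'_comp_eq_map (f := e.toEmbedding) f univ_nonempty).trans (by simp only [map_univ_equiv])

omit [Fintype A] [Fintype Ω] in
lemma histAct_snocH (g : G) (h : Hist A Ω) (a : A) (o : Ω) :
    histAct g (snocH h a o) = snocH (histAct g h) (g • a) (g • o) := by
  simp [histAct, snocH]

namespace GIPOMDP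

variable (P : GIPOMDP G S A Ω) (g : G)

lemma wRev_smul (o0 : Ω) (l : List (A × Ω)) (s : S) :
    wRev P (g • o0) (l.map fun p => (g • p.1, g • p.2)) (g • s) = wRev P o0 l s := by
  induction l generalizing s with
  | nil => simp only [List.map_nil, wRev, P.b0_inv, P.O0_inv]
  | cons p rest ih =>
    simp only [List.map_cons, wRev, P.O_inv]
    rw [← Equiv.sum_comp (MulAction.toPerm g)]
    simp only [MulAction.toPerm_apply, ih, P.T_inv]

lemma w_histAct (h : Hist A Ω) (s : S) : w P (histAct g h) (g • s) = w P h s := by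
  simp only [w, histAct, ← List.map_reverse, wRev_smul]

lemma sum_w_histAct (h : Hist A Ω) : ∑ s, w P (histAct g h) s = ∑ s, w P h s := by
  rw [← Equiv.sum_comp (MulAction.toPerm g)]
  simp only [MulAction.toPerm_apply, w_histAct]

lemma belief_histAct (h : Hist A Ω) (s : S) :
    belief P (histAct g h) (g • s) = belief P h s := by
  simp only [belief, sum_w_histAct, w_histAct]

lemma probObs_histAct (h : Hist A Ω) (a : A) (o : Ω) :
    probObs P (histAct g h) (g • a) (g • o) = probObs P h a o := by
  unfold probObs
  rw [← Equiv.sum_comp (MulAction.toPerm g)]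
  refine sum_congr rfl fun s _ => ?_
  rw [← Equiv.sum_comp (MulAction.toPerm g)]
  simp only [MulAction.toPerm_apply, belief_histAct, P.T_inv, P.O_inv]

lemma Rbar_histAct (h : Hist A Ω) (a : A) : Rbar P (histAct g h) (g • a) = Rbar P h a := by
  unfold Rbar
  rw [← Equiv.sum_comp (MulAction.toPerm g)]
  simp only [MulAction.toPerm_apply, belief_histAct, P.R_inv]

lemma bellman_histAct [Nonempty A] (γ : ℝ) {Q : Hist A Ω × A → ℝ}
    (hQ : ∀ (h : Hist A Ω) (a : A), Q (histAct g h, g • a) = Q (h, a))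
    (h : Hist A Ω) (a : A) :
    bellman P γ Q (histAct g h, g • a) = bellman P γ Q (h, a) := by
  have hmax (o : Ω) :
      univ.sup' univ_nonempty (fun a' => Q (snocH (histAct g h) (g • a) (g • o), a')) =
        univ.sup' univ_nonempty (fun a' => Q (snocH h a o, a')) := by
    rw [← sup'_univ_comp_equiv (MulAction.toPerm g)]
    simp only [Function.comp_def, MulAction.toPerm_apply, ← histAct_snocH, hQ]
  unfold bellman
  rw [Rbar_histAct, ← Equiv.sum_comp (MulAction.toPerm g)]
  simp only [MulAction.toPerm_apply, probObs_histAct, hmax]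

end GIPOMDP

theorem qIter_invariant_general {G S A Ω : Type} [Group G] [MulAction G S] [MulAction G A] [MulAction G Ω]
    [Fintype S] [Fintype A] [Fintype Ω] [Nonempty A]
    (P : GIPOMDP G S A Ω)
    (γ : ℝ) :
    ∀ (n : ℕ) (g : G) (h : Hist A Ω) (a : A),
      qIter P γ n (histAct g h, g • a) = qIter P γ n (h, a) := by
  intro n
  induction n with
  | zero => exact fun _ _ _ => rfl
  | succ n ih => exact fun g h a => P.bellman_histAct g γ (ih g) h a

/-- Invariance of the value-iteration iterates for a group-invariant POMDP:
Q_n(g•h, g•a) = Q_n(h, a) for every n. -/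
theorem qIter_invariant {G S A Ω : Type} [Group G] [MulAction G S] [MulAction G A] [MulAction G Ω]
    [Fintype S] [Fintype A] [Fintype Ω] [Nonempty S] [Nonempty A] [Nonempty Ω]
    (P : GIPOMDP G S A Ω)
    (γ : ℝ) (hγ0 : 0 ≤ γ) (hγ1 : γ < 1) :
    ∀ (n : ℕ) (g : G) (h : Hist A Ω) (a : A),
      qIter P γ n (histAct g h, g • a) = qIter P γ n (h, a) :=
  qIter_invariant_general P γ
end

section
/- Theorem 1 (invariance of the optimal Q-function): for a group-invariant POMDP, suppose Q* : H × A → ℝ is bounded, satisfies the Bellman optimality equation Q* = B Q*, and is the unique such bounded solution (i.e., every bounded Q with Q = BQ equals Q*). Then Q* is group-invariant: Q*(g•h, g•a) = Q*(h, a) for all g ∈ G, h ∈ H, a ∈ A. -/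
open scoped NNReal

variable {G S A Ω : Type} [Group G] [MulAction G S] [MulAction G A] [MulAction G Ω]
  [Fintype S] [Fintype A] [Fintype Ω]

/-! The action of `g` on states, actions and observations transports the filter weights of a
history `h` to those of `g • h`, so beliefs, observation probabilities and expected rewards are
invariant and the Bellman operator commutes with precomposition by `g`. Hence `Q* ∘ g` is again a
bounded fixed point of the Bellman operator, and uniqueness forces `Q* ∘ g = Q*`. -/

open Finset

section Invariance

variable (P : GIPOMDP G S A Ω) (g : G)

lemma wRev_smul (o0 : Ω) (l : List (A × Ω)) (s : S) :
    wRev P (g • o0) (l.map fun p => (g • p.1, g • p.2)) (g • s) = wRev P o0 l s := by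
  induction l generalizing s with
  | nil => simp only [List.map_nil, wRev, P.b0_inv, P.O0_inv]
  | cons p rest ih =>
    simp only [List.map_cons, wRev, P.O_inv]
    congr 1
    rw [← Equiv.sum_comp (MulAction.toPerm g)]
    simp only [MulAction.toPerm_apply, ih, P.T_inv]

lemma w_histAct (h : Hist A Ω) (s : S) : w P (histAct g h) (g • s) = w P h s := by
  simp only [w, histAct, ← List.map_reverse, wRev_smul]

lemma belief_histAct (h : Hist A Ω) (s : S) :
    belief P (histAct g h) (g • s) = belief P h s := by
  have hsum : ∑ s', w P (histAct g h) s' = ∑ s', w P h s' := by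
    rw [← Equiv.sum_comp (MulAction.toPerm g)]
    simp only [MulAction.toPerm_apply, w_histAct]
  simp only [belief, hsum, w_histAct]

lemma probObs_histAct (h : Hist A Ω) (a : A) (o : Ω) :
    probObs P (histAct g h) (g • a) (g • o) = probObs P h a o := by
  simp only [probObs]
  rw [← Equiv.sum_comp (MulAction.toPerm g)]
  refine sum_congr rfl fun s _ => ?_
  rw [← Equiv.sum_comp (MulAction.toPerm g)]
  simp only [MulAction.toPerm_apply, belief_histAct, P.T_inv, P.O_inv]

lemma Rbar_histAct (h : Hist A Ω) (a : A) : Rbar P (histAct g h) (g • a) = Rbar P h a := by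
  simp only [Rbar]
  rw [← Equiv.sum_comp (MulAction.toPerm g)]
  simp only [MulAction.toPerm_apply, belief_histAct, P.R_inv]

lemma bellman_comp_histAct [Nonempty A] (γ : ℝ) (Q : Hist A Ω × A → ℝ) (x : Hist A Ω × A) :
    bellman P γ (fun y => Q (histAct g y.1, g • y.2)) x
      = bellman P γ Q (histAct g x.1, g • x.2) := by
  have hsnoc : ∀ o : Ω, histAct g (snocH x.1 x.2 o) = snocH (histAct g x.1) (g • x.2) (g • o) :=
    fun o => by simp [snocH, histAct]
  simp only [bellman, Rbar_histAct, sup'_univ_eq_ciSup]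
  congr 2
  refine Fintype.sum_equiv (MulAction.toPerm g) _ _ fun o => ?_
  simp only [MulAction.toPerm_apply, probObs_histAct, hsnoc]
  congr 1
  exact (MulAction.toPerm g).iSup_comp (g := fun a' => Q (_, a'))

end Invariance

theorem optimal_Q_invariant_general {G S A Ω : Type} [Group G] [MulAction G S] [MulAction G A] [MulAction G Ω]
    [Fintype S] [Fintype A] [Fintype Ω] [Nonempty A]
    (P : GIPOMDP G S A Ω)
    (γ : ℝ)
    (Qstar : Hist A Ω × A → ℝ)
    (hBdd : ∃ C : ℝ, ∀ x : Hist A Ω × A, |Qstar x| ≤ C)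
    (hFix : Qstar = bellman P γ Qstar)
    (hUniq : ∀ Q : Hist A Ω × A → ℝ,
      (∃ C : ℝ, ∀ x : Hist A Ω × A, |Q x| ≤ C) → Q = bellman P γ Q → Q = Qstar) :
    ∀ (g : G) (h : Hist A Ω) (a : A), Qstar (histAct g h, g • a) = Qstar (h, a) := by
  intro g h a
  set Qg : Hist A Ω × A → ℝ := fun x => Qstar (histAct g x.1, g • x.2)
  have hBddg : ∃ C : ℝ, ∀ x, |Qg x| ≤ C := by
    obtain ⟨C, hC⟩ := hBdd
    exact ⟨C, fun x => hC _⟩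
  have hFixg : Qg = bellman P γ Qg := by
    funext x
    rw [bellman_comp_histAct, ← hFix]
  exact congrFun (hUniq Qg hBddg hFixg) (h, a)

/-- Theorem 1 (invariance of the optimal Q-function): if `Q*` is the unique bounded
solution of the Bellman optimality equation, then `Q*(g•h, g•a) = Q*(h, a)`. -/
theorem optimal_Q_invariant {G S A Ω : Type} [Group G] [MulAction G S] [MulAction G A] [MulAction G Ω]
    [Fintype S] [Fintype A] [Fintype Ω] [Nonempty S] [Nonempty A] [Nonempty Ω]
    (P : GIPOMDP G S A Ω)
    (γ : ℝ) (hγ0 : 0 ≤ γ) (hγ1 : γ < 1)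
    (Qstar : Hist A Ω × A → ℝ)
    (hBdd : ∃ C : ℝ, ∀ x : Hist A Ω × A, |Qstar x| ≤ C)
    (hFix : Qstar = bellman P γ Qstar)
    (hUniq : ∀ Q : Hist A Ω × A → ℝ,
      (∃ C : ℝ, ∀ x : Hist A Ω × A, |Q x| ≤ C) → Q = bellman P γ Q → Q = Qstar) :
    ∀ (g : G) (h : Hist A Ω) (a : A), Qstar (histAct g h, g • a) = Qstar (h, a) :=
  optimal_Q_invariant_general P γ Qstar hBdd hFix hUniq
end
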